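/- arXiv:2111.05137 — 2 statements merged into one kernel-verified Lean document; each statement's English description precedes it below -/
import Mathlib

section
/- Under the random effects model φ ~ Normal(0, τ² P^{-1} I_P), β ~ Normal(ω₀ φ, τ² P^{-1} I_P), with Σ = I_P (so λ̃ = λ̄² = 1) and σ_a² = 1, the selection bias Δ(1) = (φᵀβ)/(1 + φᵀφ) converges in probability to ω₀ τ²/(1 + τ²) as P → ∞. -/
/-!
Write `S = φᵀφ` and `T = φᵀe`, so that `Δ(1) = (ω₀ S + T) / (1 + S)`. With `v = τ²/P`, `S` is a
sum of `P` independent squares of `N(0, v)` variables, hence has mean `τ²` and variance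
`P v² Var(Z²) = O(1/P)` for `Z ~ N(0, 1)`; `T` is a sum of `P` independent products of
independent `N(0, v)` variables, hence has mean `0` and variance `P v² = τ⁴/P`. Chebyshev's
inequality gives `S → τ²` and `T → 0` in probability, and the limit of `Δ(1)` follows because
`(s, t) ↦ (ω₀ s + t) / (1 + s)` is continuous at `(τ², 0)`.
-/

open MeasureTheory ProbabilityTheory Matrix Filter
open scoped NNReal ENNReal Topology

namespace MeasureTheory

section ConvergenceInMeasure

variable {α ι E F : Type*} [MeasurableSpace α] {μ : Measure α} {l : Filter ι}
  [PseudoMetricSpace E] [PseudoMetricSpace F]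

theorem TendstoInMeasure.prodMk {f : ι → α → E} {g : ι → α → F} {f₀ : α → E} {g₀ : α → F}
    (hf : TendstoInMeasure μ f l f₀) (hg : TendstoInMeasure μ g l g₀) :
    TendstoInMeasure μ (fun i x => (f i x, g i x)) l fun x => (f₀ x, g₀ x) := by
  rw [tendstoInMeasure_iff_dist] at *
  intro ε hε
  have hsum := (hf ε hε).add (hg ε hε)
  rw [add_zero] at hsum
  refine tendsto_of_tendsto_of_tendsto_of_le_of_le tendsto_const_nhds hsum (fun _ => zero_le)
    fun i => (measure_mono fun x hx => ?_).trans (measure_union_le _ _)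
  simpa only [Set.mem_union, Set.mem_ofPred_eq, Prod.dist_eq, le_max_iff] using hx

theorem TendstoInMeasure.comp_continuousAt {f : ι → α → E} {a : E} {g : E → F}
    (hf : TendstoInMeasure μ f l fun _ => a) (hg : ContinuousAt g a) :
    TendstoInMeasure μ (fun i x => g (f i x)) l fun _ => g a := by
  rw [tendstoInMeasure_iff_dist] at *
  intro ε hε
  obtain ⟨η, hη, hgη⟩ := Metric.continuousAt_iff.1 hg ε hε
  refine tendsto_of_tendsto_of_tendsto_of_le_of_le tendsto_const_nhds (hf η hη) (fun _ => zero_le)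
    fun i => measure_mono fun x hx => ?_
  by_contra hx'
  simp only [Set.mem_ofPred_eq, not_le] at hx hx'
  exact (hgη hx').not_ge hx

end ConvergenceInMeasure

instance : ENNReal.HolderTriple 4 4 2 where
  inv_add_inv_eq_inv := by
    rw [← ENNReal.add_halves (2⁻¹ : ℝ≥0∞), ENNReal.div_eq_inv_mul,
      ← ENNReal.mul_inv (by simp) (by simp)]
    norm_num

theorem fun_dotProduct_eq_sum {Ω ι : Type*} [Fintype ι] (x y : Ω → ι → ℝ) :
    (fun ω => x ω ⬝ᵥ y ω) = ∑ i, fun ω => x ω i * y ω i := by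
  ext ω
  simp [dotProduct]

theorem memLp_dotProduct {Ω ι : Type*} [MeasurableSpace Ω] {μ : Measure Ω} [Fintype ι]
    {x y : Ω → ι → ℝ} (hx : ∀ i, MemLp (fun ω => x ω i) 4 μ)
    (hy : ∀ i, MemLp (fun ω => y ω i) 4 μ) :
    MemLp (fun ω => x ω ⬝ᵥ y ω) 2 μ :=
  memLp_finsetSum _ fun i _ => (hy i).mul' (hx i)

end MeasureTheory

namespace ProbabilityTheory

theorem tendstoInMeasure_const_of_variance_tendsto_zero {Ω ι : Type*} [MeasurableSpace Ω]
    {μ : Measure Ω} [IsFiniteMeasure μ] {l : Filter ι} {X : ι → Ω → ℝ} {c : ℝ}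
    (hX : ∀ᶠ i in l, MemLp (X i) 2 μ) (hmean : ∀ᶠ i in l, μ[X i] = c)
    (hvar : Tendsto (fun i => Var[X i; μ]) l (𝓝 0)) :
    TendstoInMeasure μ X l fun _ => c := by
  rw [tendstoInMeasure_iff_dist]
  intro ε hε
  have hbound : Tendsto (fun i => ENNReal.ofReal (Var[X i; μ] / ε ^ 2)) l (𝓝 0) := by
    simpa using ENNReal.tendsto_ofReal (hvar.div_const (ε ^ 2))
  refine tendsto_of_tendsto_of_tendsto_of_le_of_le' tendsto_const_nhds hbound
    (Eventually.of_forall fun _ => zero_le) ?_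
  filter_upwards [hX, hmean] with i hXi hmi
  simpa only [Real.dist_eq, hmi] using meas_ge_le_variance_div_sq hXi hε

theorem hasLaw_of_map_eq {Ω 𝓧 : Type*} [MeasurableSpace Ω] [MeasurableSpace 𝓧] {μ : Measure Ω}
    {ν : Measure 𝓧} [NeZero ν] {X : Ω → 𝓧} (h : μ.map X = ν) : HasLaw X ν μ :=
  ⟨aemeasurable_of_map_neZero (h ▸ ‹NeZero ν›), h⟩

section Gaussian

/- Scaling `N(0, 1)` by `√v` gives `N(0, v)`, so the value `Var(Z²) = 2` is never needed. -/
theorem variance_fun_sq_gaussianReal (v : ℝ≥0) :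
    Var[fun x => x ^ 2; gaussianReal 0 v] = v ^ 2 * Var[fun x => x ^ 2; gaussianReal 0 1] := by
  have hscale : (gaussianReal 0 1).map ((NNReal.sqrt v : ℝ) * ·) = gaussianReal 0 v := by
    rw [gaussianReal_map_const_mul]
    congr 1
    · simp
    · ext; simp
  rw [← hscale, variance_map (by fun_prop) (by fun_prop)]
  simp only [Function.comp_def, mul_pow]
  rw [variance_const_mul]
  simp

variable {Ω : Type*} [MeasurableSpace Ω] {μ : Measure Ω} {X Y : Ω → ℝ} {v : ℝ≥0}

theorem HasLaw.integral_gaussianReal (hX : HasLaw X (gaussianReal 0 v) μ) : μ[X] = 0 := by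
  rw [hX.integral_eq, integral_id_gaussianReal]

theorem HasLaw.integral_sq_gaussianReal (hX : HasLaw X (gaussianReal 0 v) μ) :
    μ[fun ω => X ω ^ 2] = (v : ℝ) := by
  have := hX.isProbabilityMeasure
  have h := variance_eq_sub hX.hasGaussianLaw.memLp_two
  rw [hX.variance_eq, variance_id_gaussianReal, hX.integral_gaussianReal] at h
  simpa using h.symm

theorem HasLaw.variance_sq_gaussianReal (hX : HasLaw X (gaussianReal 0 v) μ) :
    Var[fun ω => X ω ^ 2; μ] = v ^ 2 * Var[fun x => x ^ 2; gaussianReal 0 1] := by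
  rw [← variance_fun_sq_gaussianReal, ← hX.map_eq, variance_map (by fun_prop) hX.aemeasurable]
  rfl

theorem IndepFun.variance_mul_of_hasLaw_gaussianReal (hX : HasLaw X (gaussianReal 0 v) μ)
    (hY : HasLaw Y (gaussianReal 0 v) μ) (hXY : X ⟂ᵢ[μ] Y) :
    Var[fun ω => X ω * Y ω; μ] = v ^ 2 := by
  have := hX.isProbabilityMeasure
  have hmean : μ[fun ω => X ω * Y ω] = 0 := by
    rw [hXY.integral_fun_mul_eq_mul_integral hX.aemeasurable.aestronglyMeasurable
      hY.aemeasurable.aestronglyMeasurable, hX.integral_gaussianReal, zero_mul]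
  have hsq : μ[fun ω => (X ω * Y ω) ^ 2] = (v : ℝ) ^ 2 := by
    have hXY2 : (fun ω => X ω ^ 2) ⟂ᵢ[μ] (fun ω => Y ω ^ 2) :=
      hXY.comp (measurable_id.pow_const 2) (measurable_id.pow_const 2)
    simp_rw [mul_pow]
    rw [hXY2.integral_fun_mul_eq_mul_integral
      (hX.aemeasurable.pow_const 2).aestronglyMeasurable
      (hY.aemeasurable.pow_const 2).aestronglyMeasurable,
      hX.integral_sq_gaussianReal, hY.integral_sq_gaussianReal, sq]
  rw [variance_eq_sub ((hY.hasGaussianLaw.memLp (p := 4) (by norm_num)).mul'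
    (hX.hasGaussianLaw.memLp (p := 4) (by norm_num)))]
  simpa [hmean] using hsq

end Gaussian

section DotProduct

variable {Ω ι : Type*} [MeasurableSpace Ω] {μ : Measure Ω} [Fintype ι]
  {x y : Ω → ι → ℝ} {v : ℝ≥0}

theorem integral_dotProduct_self_of_hasLaw_gaussianReal
    (hx : ∀ i, HasLaw (fun ω => x ω i) (gaussianReal 0 v) μ) :
    μ[fun ω => x ω ⬝ᵥ x ω] = Fintype.card ι * (v : ℝ) := by
  simp only [dotProduct, ← sq]
  rw [integral_finsetSum _ fun i _ => (hx i).hasGaussianLaw.memLp_two.integrable_sq]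
  simp [(hx _).integral_sq_gaussianReal]

theorem variance_dotProduct_self_of_hasLaw_gaussianReal
    (hx : ∀ i, HasLaw (fun ω => x ω i) (gaussianReal 0 v) μ)
    (hind : iIndepFun (fun i ω => x ω i) μ) :
    Var[fun ω => x ω ⬝ᵥ x ω; μ] =
      Fintype.card ι * v ^ 2 * Var[fun x => x ^ 2; gaussianReal 0 1] := by
  have hx4 (i) : MemLp (fun ω => x ω i) 4 μ := (hx i).hasGaussianLaw.memLp (by norm_num)
  rw [fun_dotProduct_eq_sum, IndepFun.variance_sum (fun i _ => (hx4 i).mul' (hx4 i))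
    fun i _ j _ hij => (hind.indepFun hij).comp (measurable_id.mul measurable_id)
      (measurable_id.mul measurable_id)]
  simp [← sq, (hx _).variance_sq_gaussianReal, mul_assoc]

theorem integral_dotProduct_of_hasLaw_gaussianReal
    (hx : ∀ i, HasLaw (fun ω => x ω i) (gaussianReal 0 v) μ)
    (hy : ∀ i, HasLaw (fun ω => y ω i) (gaussianReal 0 v) μ)
    (hind : iIndepFun (Sum.elim (fun i ω => x ω i) (fun i ω => y ω i)) μ) :
    μ[fun ω => x ω ⬝ᵥ y ω] = 0 := by
  have hxy (i) : (fun ω => x ω i) ⟂ᵢ[μ] (fun ω => y ω i) :=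
    hind.indepFun (i := .inl i) (j := .inr i) Sum.inl_ne_inr
  simp only [dotProduct]
  rw [integral_finsetSum (f := fun i ω => x ω i * y ω i) _ fun i _ =>
    (hxy i).integrable_mul (hx i).hasGaussianLaw.integrable (hy i).hasGaussianLaw.integrable]
  refine Finset.sum_eq_zero fun i _ => ?_
  rw [(hxy i).integral_fun_mul_eq_mul_integral (hx i).aemeasurable.aestronglyMeasurable
    (hy i).aemeasurable.aestronglyMeasurable, (hx i).integral_gaussianReal, zero_mul]

theorem variance_dotProduct_of_hasLaw_gaussianReal
    (hx : ∀ i, HasLaw (fun ω => x ω i) (gaussianReal 0 v) μ)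
    (hy : ∀ i, HasLaw (fun ω => y ω i) (gaussianReal 0 v) μ)
    (hind : iIndepFun (Sum.elim (fun i ω => x ω i) (fun i ω => y ω i)) μ) :
    Var[fun ω => x ω ⬝ᵥ y ω; μ] = Fintype.card ι * v ^ 2 := by
  have hmeas : ∀ k, AEMeasurable (Sum.elim (fun i ω => x ω i) (fun i ω => y ω i) k) μ :=
    Sum.forall.2 ⟨fun i => (hx i).aemeasurable, fun i => (hy i).aemeasurable⟩
  have hx4 (i) : MemLp (fun ω => x ω i) 4 μ := (hx i).hasGaussianLaw.memLp (by norm_num)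
  have hy4 (i) : MemLp (fun ω => y ω i) 4 μ := (hy i).hasGaussianLaw.memLp (by norm_num)
  rw [fun_dotProduct_eq_sum, IndepFun.variance_sum (fun i _ => (hy4 i).mul' (hx4 i))
    fun i _ j _ hij => hind.indepFun_mul_mul₀ hmeas (.inl i) (.inr i) (.inl j) (.inr j)
      (by simpa using hij) Sum.inl_ne_inr Sum.inr_ne_inl (by simpa using hij)]
  simp [fun i => (hind.indepFun (i := .inl i) (j := .inr i) Sum.inl_ne_inr
    ).variance_mul_of_hasLaw_gaussianReal (hx i) (hy i)]

end DotProduct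

section Asymptotics

variable {Ω : Type*} [MeasurableSpace Ω] {μ : Measure Ω} [IsProbabilityMeasure μ] {s : ℝ}
  {x y : (P : ℕ) → Ω → Fin P → ℝ}

theorem tendstoInMeasure_dotProduct_self_of_hasLaw_gaussianReal (hs : 0 ≤ s)
    (hx : ∀ P j, HasLaw (fun ω => x P ω j) (gaussianReal 0 (s / P).toNNReal) μ)
    (hind : ∀ P, iIndepFun (fun j ω => x P ω j) μ) :
    TendstoInMeasure μ (fun P ω => x P ω ⬝ᵥ x P ω) atTop fun _ => s := by
  have hv (P : ℕ) : ((s / P).toNNReal : ℝ) = s / P := Real.coe_toNNReal _ (by positivity)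
  refine tendstoInMeasure_const_of_variance_tendsto_zero
    (.of_forall fun P => memLp_dotProduct (fun j => (hx P j).hasGaussianLaw.memLp (by norm_num))
      fun j => (hx P j).hasGaussianLaw.memLp (by norm_num)) ?_ ?_
  · filter_upwards [eventually_ne_atTop 0] with P hP
    rw [integral_dotProduct_self_of_hasLaw_gaussianReal (hx P), Fintype.card_fin, hv]
    field_simp
  · refine (tendsto_const_div_atTop_nhds_zero_nat
      (s ^ 2 * Var[fun x => x ^ 2; gaussianReal 0 1])).congr' ?_
    filter_upwards [eventually_ne_atTop 0] with P hP
    rw [variance_dotProduct_self_of_hasLaw_gaussianReal (hx P) (hind P), Fintype.card_fin, hv]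
    field_simp

theorem tendstoInMeasure_dotProduct_of_hasLaw_gaussianReal (hs : 0 ≤ s)
    (hx : ∀ P j, HasLaw (fun ω => x P ω j) (gaussianReal 0 (s / P).toNNReal) μ)
    (hy : ∀ P j, HasLaw (fun ω => y P ω j) (gaussianReal 0 (s / P).toNNReal) μ)
    (hind : ∀ P, iIndepFun (Sum.elim (fun j ω => x P ω j) (fun j ω => y P ω j)) μ) :
    TendstoInMeasure μ (fun P ω => x P ω ⬝ᵥ y P ω) atTop fun _ => 0 := by
  have hv (P : ℕ) : ((s / P).toNNReal : ℝ) = s / P := Real.coe_toNNReal _ (by positivity)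
  refine tendstoInMeasure_const_of_variance_tendsto_zero
    (.of_forall fun P => memLp_dotProduct (fun j => (hx P j).hasGaussianLaw.memLp (by norm_num))
      fun j => (hy P j).hasGaussianLaw.memLp (by norm_num))
    (.of_forall fun P => integral_dotProduct_of_hasLaw_gaussianReal (hx P) (hy P) (hind P)) ?_
  refine (tendsto_const_div_atTop_nhds_zero_nat (s ^ 2)).congr' ?_
  filter_upwards [eventually_ne_atTop 0] with P hP
  rw [variance_dotProduct_of_hasLaw_gaussianReal (hx P) (hy P) (hind P), Fintype.card_fin, hv]
  field_simp

end Asymptotics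

end ProbabilityTheory

theorem rem_selection_bias_limit_general
    {Ω : Type*} [MeasurableSpace Ω] (μ : Measure Ω) [IsProbabilityMeasure μ]
    (ω₀ τ : ℝ)
    (φv e βv : (P : ℕ) → Ω → (Fin P → ℝ))
    -- all 2P coordinates of (φ, e) are jointly independent Gaussians
    (hindep : ∀ P : ℕ, iIndepFun
      (Sum.elim (fun j ω => φv P ω j) (fun j ω => e P ω j) :
        (Fin P ⊕ Fin P) → Ω → ℝ) μ)
    (hφlaw : ∀ P (j : Fin P), Measure.map (fun ω => φv P ω j) μ =
      gaussianReal 0 (τ ^ 2 / P).toNNReal)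
    (helaw : ∀ P (j : Fin P), Measure.map (fun ω => e P ω j) μ =
      gaussianReal 0 (τ ^ 2 / P).toNNReal)
    (hβ : ∀ P ω (j : Fin P), βv P ω j = ω₀ * φv P ω j + e P ω j)
    (Δ : (P : ℕ) → Ω → ℝ)
    (hΔ : Δ = fun P ω =>
      (φv P ω ⬝ᵥ βv P ω) / (1 + φv P ω ⬝ᵥ φv P ω)) :
    ∀ δ : ℝ, 0 < δ →
      Tendsto (fun P : ℕ =>
          μ {ω | δ ≤ |Δ P ω - ω₀ * τ ^ 2 / (1 + τ ^ 2)|}) atTop (nhds 0) := by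
  have hφ (P) (j : Fin P) := hasLaw_of_map_eq (hφlaw P j)
  have he (P) (j : Fin P) := hasLaw_of_map_eq (helaw P j)
  have hS := tendstoInMeasure_dotProduct_self_of_hasLaw_gaussianReal (sq_nonneg τ) hφ
    fun P => (hindep P).precomp Sum.inl_injective
  have hT := tendstoInMeasure_dotProduct_of_hasLaw_gaussianReal (sq_nonneg τ) hφ he hindep
  have hg : ContinuousAt (fun p : ℝ × ℝ => (ω₀ * p.1 + p.2) / (1 + p.1)) (τ ^ 2, 0) :=
    ContinuousAt.div (by fun_prop) (by fun_prop) (by positivity)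
  have hΔST : Δ = fun P ω =>
      (ω₀ * (φv P ω ⬝ᵥ φv P ω) + φv P ω ⬝ᵥ e P ω) / (1 + φv P ω ⬝ᵥ φv P ω) := by
    subst hΔ
    ext P ω
    rw [show βv P ω = ω₀ • φv P ω + e P ω from funext (hβ P ω), dotProduct_add, dotProduct_smul,
      smul_eq_mul]
  intro δ hδ
  simpa [hΔST, Real.dist_eq] using
    tendstoInMeasure_iff_dist.1 ((hS.prodMk hT).comp_continuousAt hg) δ hδ

/-- Under the random effects model `φ ~ Normal(0, τ²P⁻¹I_P)`,
`β = ω₀φ + e` with `e ~ Normal(0, τ²P⁻¹I_P)` independent of `φ` (so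
`β | φ ~ Normal(ω₀φ, τ²P⁻¹I_P)`), with `Σ = I_P` and `σ_a² = 1`, the selection
bias `Δ(1) = (φᵀβ)/(1 + φᵀφ)` converges in probability to `ω₀τ²/(1 + τ²)` as
`P → ∞`. -/
theorem rem_selection_bias_limit
    {Ω : Type*} [MeasurableSpace Ω] (μ : Measure Ω) [IsProbabilityMeasure μ]
    (ω₀ τ : ℝ) (hτ : 0 < τ)
    (φv e βv : (P : ℕ) → Ω → (Fin P → ℝ))
    -- all 2P coordinates of (φ, e) are jointly independent Gaussians
    (hindep : ∀ P : ℕ, iIndepFun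
      (Sum.elim (fun j ω => φv P ω j) (fun j ω => e P ω j) :
        (Fin P ⊕ Fin P) → Ω → ℝ) μ)
    (hφlaw : ∀ P (j : Fin P), Measure.map (fun ω => φv P ω j) μ =
      gaussianReal 0 (τ ^ 2 / P).toNNReal)
    (helaw : ∀ P (j : Fin P), Measure.map (fun ω => e P ω j) μ =
      gaussianReal 0 (τ ^ 2 / P).toNNReal)
    (hβ : ∀ P ω (j : Fin P), βv P ω j = ω₀ * φv P ω j + e P ω j)
    (Δ : (P : ℕ) → Ω → ℝ)
    (hΔ : Δ = fun P ω =>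
      (φv P ω ⬝ᵥ βv P ω) / (1 + φv P ω ⬝ᵥ φv P ω)) :
    ∀ δ : ℝ, 0 < δ →
      Tendsto (fun P : ℕ =>
          μ {ω | δ ≤ |Δ P ω - ω₀ * τ ^ 2 / (1 + τ ^ 2)|}) atTop (nhds 0) :=
  rem_selection_bias_limit_general μ ω₀ τ φv e βv hindep hφlaw helaw hβ Δ hΔ
end

section
/- In the latent factor model Σ = ΛΛᵀ + σ_x² I with L nonzero eigenvalues κ₁,…,κ_L of ΛΛᵀ, and with W = Γᵀβ, Z = Γᵀφ where β ~ Normal(0, τ_β²I) and φ ~ Normal(0, τ_φ²I) independent, the selection bias satisfies Δ(a) = a[Σ_{j=1}^L (κ_j + σ_x²)W_jZ_j + σ_x²Σ_{j=L+1}^P W_jZ_j] / [σ_a² + Σ_{j=1}^L (κ_j+σ_x²)Z_j² + σ_x²Σ_{j=L+1}^P Z_j²]; in particular, when σ_x = 0 this reduces exactly to Δ(a) = a(Σ_{j=1}^L κ_jW_jZ_j)/(σ_a² + Σ_{j=1}^L κ_jZ_j²), which depends on only L (not P) independent Gaussian pairs and hence does not degenerate as P → ∞ with L fixed. -/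
open MeasureTheory ProbabilityTheory Filter Finset

theorem Finset.sum_ite_add_mul_eq {ι R : Type*} [Fintype ι] [CommSemiring R]
    (p : ι → Prop) [DecidablePred p] (c f : ι → R) (s : R) :
    ∑ j, (if p j then c j + s else s) * f j =
      ∑ j ∈ univ.filter p, (c j + s) * f j + s * ∑ j ∈ univ.filter (fun j => ¬ p j), f j := by
  simp only [ite_mul, sum_ite, mul_sum]

theorem latent_factor_selection_bias_general
    {Ω : Type*}
    {P L : ℕ}
    (a σa σx : ℝ)
    (κ : Fin P → ℝ)
    (lam : Fin P → ℝ)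
    (hlam : lam = fun j : Fin P => if (j : ℕ) < L then κ j + σx ^ 2 else σx ^ 2)
    (W Z : Ω → (Fin P → ℝ))
    (Δ : Ω → ℝ)
    (hΔ : Δ = fun ω =>
      a * (∑ j, lam j * W ω j * Z ω j) / (σa ^ 2 + ∑ j, lam j * (Z ω j) ^ 2)) :
    -- (1) split into the leading L coordinates and the remaining P − L
    (∀ ω, Δ ω =
      a * ((∑ j ∈ univ.filter (fun j : Fin P => (j : ℕ) < L),
              (κ j + σx ^ 2) * W ω j * Z ω j) +
            σx ^ 2 * ∑ j ∈ univ.filter (fun j : Fin P => ¬ (j : ℕ) < L),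
              W ω j * Z ω j) /
        (σa ^ 2 +
          (∑ j ∈ univ.filter (fun j : Fin P => (j : ℕ) < L),
            (κ j + σx ^ 2) * (Z ω j) ^ 2) +
          σx ^ 2 * ∑ j ∈ univ.filter (fun j : Fin P => ¬ (j : ℕ) < L),
            (Z ω j) ^ 2) ∧
    -- (2) when σ_x = 0 only the leading L coordinates remain
    (σx = 0 → ∀ ω, Δ ω =
      a * (∑ j ∈ univ.filter (fun j : Fin P => (j : ℕ) < L), κ j * W ω j * Z ω j) /
        (σa ^ 2 + ∑ j ∈ univ.filter (fun j : Fin P => (j : ℕ) < L),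
          κ j * (Z ω j) ^ 2))) := by
  subst hlam hΔ
  refine fun ω => ⟨?_, fun hσx ω' => ?_⟩
  · simp only [mul_assoc, sum_ite_add_mul_eq, add_assoc]
  · subst hσx
    simp only [mul_assoc, sum_ite_add_mul_eq]
    simp

/-- In the latent factor model `Σ = ΛΛᵀ + σ_x²I` with `L`
nonzero eigenvalues `κ₁,…,κ_L` of `ΛΛᵀ` (so the eigenvalues of `Σ` are
`κ_j + σ_x²` for `j ≤ L` and `σ_x²` for `j > L`), and with `W = Γᵀβ`, `Z = Γᵀφ`
where `β ~ Normal(0, τ_β²I)` and `φ ~ Normal(0, τ_φ²I)` independently, the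
selection bias `Δ(a) = a(Σ_jλ_jW_jZ_j)/(σ_a² + Σ_jλ_jZ_j²)` satisfies the
stated split into the leading `L` coordinates and the rest; in particular when
`σ_x = 0` it reduces exactly to
`Δ(a) = a(Σ_{j≤L}κ_jW_jZ_j)/(σ_a² + Σ_{j≤L}κ_jZ_j²)`, which involves only `L`
(not `P`) independent Gaussian pairs. -/
theorem latent_factor_selection_bias
    {Ω : Type*} [MeasurableSpace Ω] (μ : Measure Ω) [IsProbabilityMeasure μ]
    {P L : ℕ} (hLP : L ≤ P)
    (a σa σx τβ τφ : ℝ) (hσa : 0 < σa) (hτβ : 0 < τβ) (hτφ : 0 < τφ)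
    (κ : Fin P → ℝ) (hκ : ∀ j, 0 ≤ κ j)
    (lam : Fin P → ℝ)
    (hlam : lam = fun j : Fin P => if (j : ℕ) < L then κ j + σx ^ 2 else σx ^ 2)
    (W Z : Ω → (Fin P → ℝ))
    -- W_j i.i.d. Normal(0, τ_β²), Z_j i.i.d. Normal(0, τ_φ²), all independent
    (hindep : iIndepFun
      (Sum.elim (fun (j : Fin P) ω => W ω j) (fun (j : Fin P) ω => Z ω j) :
        (Fin P ⊕ Fin P) → Ω → ℝ) μ)
    (hWlaw : ∀ j, Measure.map (fun ω => W ω j) μ = gaussianReal 0 (τβ ^ 2).toNNReal)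
    (hZlaw : ∀ j, Measure.map (fun ω => Z ω j) μ = gaussianReal 0 (τφ ^ 2).toNNReal)
    (Δ : Ω → ℝ)
    (hΔ : Δ = fun ω =>
      a * (∑ j, lam j * W ω j * Z ω j) / (σa ^ 2 + ∑ j, lam j * (Z ω j) ^ 2)) :
    -- (1) split into the leading L coordinates and the remaining P − L
    (∀ ω, Δ ω =
      a * ((∑ j ∈ univ.filter (fun j : Fin P => (j : ℕ) < L),
              (κ j + σx ^ 2) * W ω j * Z ω j) +
            σx ^ 2 * ∑ j ∈ univ.filter (fun j : Fin P => ¬ (j : ℕ) < L),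
              W ω j * Z ω j) /
        (σa ^ 2 +
          (∑ j ∈ univ.filter (fun j : Fin P => (j : ℕ) < L),
            (κ j + σx ^ 2) * (Z ω j) ^ 2) +
          σx ^ 2 * ∑ j ∈ univ.filter (fun j : Fin P => ¬ (j : ℕ) < L),
            (Z ω j) ^ 2) ∧
    -- (2) when σ_x = 0 only the leading L coordinates remain
    (σx = 0 → ∀ ω, Δ ω =
      a * (∑ j ∈ univ.filter (fun j : Fin P => (j : ℕ) < L), κ j * W ω j * Z ω j) /
        (σa ^ 2 + ∑ j ∈ univ.filter (fun j : Fin P => (j : ℕ) < L),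
          κ j * (Z ω j) ^ 2))) :=
  latent_factor_selection_bias_general a σa σx κ lam hlam W Z Δ hΔ
end
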